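/- Consider normalized design, ‖ψ_j‖_n = 1 for all j. Let u > 0 and let J = {j_1,…,j_N} ⊆ {1,…,p} be a maximal u-packing set of {ψ_j}: ‖ψ_{j_k} − ψ_{j_l}‖_n ≥ u for all k ≠ l, and for every j ∈ {1,…,p} \ J there exists k with ‖ψ_j − ψ_{j_k}‖_n < u. Then for every S with J ⊆ S and S ≠ {1,…,p}, writing s := |S|, and every L ≥ 1, one has φ²(L,S) ≤ s·u². -/

import Mathlib

open Finset

noncomputable section

/-- Squared normalized norm: `‖v‖ₙ² = ‖v‖₂²/n`. -/
def nsq (n : ℕ) (v : Fin n → ℝ) : ℝ := (∑ i, v i ^ 2) / n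

/-- Normalized norm `‖v‖ₙ`. -/
def nnorm (n : ℕ) (v : Fin n → ℝ) : ℝ := Real.sqrt (nsq n v)

/-- `ℓ₁`-norm of a coefficient vector. -/
def l1 {p : ℕ} (β : Fin p → ℝ) : ℝ := ∑ j, |β j|

/-- `f_β := ∑ⱼ βⱼ ψⱼ`. -/
def fvec {n p : ℕ} (ψ : Fin p → Fin n → ℝ) (β : Fin p → ℝ) : Fin n → ℝ :=
  fun i => ∑ j, β j * ψ j i

/-- Restriction `β_S` of `β` to an index set `S`. -/
def restr {p : ℕ} (S : Finset (Fin p)) (β : Fin p → ℝ) : Fin p → ℝ :=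
  fun j => if j ∈ S then β j else 0

/-- Compatibility constant `φ²(L,S)`. -/
def phiSq {n p : ℕ} (ψ : Fin p → Fin n → ℝ) (L : ℝ) (S : Finset (Fin p)) : ℝ :=
  sInf {x : ℝ | ∃ β : Fin p → ℝ, l1 (restr S β) = 1 ∧ l1 (β - restr S β) ≤ L ∧
    x = S.card * nsq n (fvec ψ (restr S β) - fvec ψ (β - restr S β))}

/-- Covering number `N(δ, F, ‖·‖ₙ)`. -/
def covN (n : ℕ) (δ : ℝ) (F : Set (Fin n → ℝ)) : ℕ :=
  sInf {N : ℕ | ∃ g : Fin N → (Fin n → ℝ), ∀ f ∈ F, ∃ k, nnorm n (f - g k) ≤ δ}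

/-!
Since `S ≠ univ` there is an index `j ∉ S`, hence `j ∉ J`, and maximality of the packing gives
`k ∈ J ⊆ S` with `‖ψ_j - ψ_k‖ₙ < u`. The vector `β = e_k + e_j` is admissible in the definition
of `φ²(L,S)` (`β_S = e_k`, `β_{Sᶜ} = e_j`, `L ≥ 1`), so `φ²(L,S) ≤ s ‖ψ_k - ψ_j‖ₙ² ≤ s u²`.
-/

lemma nsq_nonneg {n : ℕ} (v : Fin n → ℝ) : 0 ≤ nsq n v :=
  div_nonneg (Finset.sum_nonneg fun i _ => sq_nonneg (v i)) n.cast_nonneg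

lemma nnorm_sq {n : ℕ} (v : Fin n → ℝ) : nnorm n v ^ 2 = nsq n v :=
  Real.sq_sqrt (nsq_nonneg v)

lemma nsq_sub_comm {n : ℕ} (v w : Fin n → ℝ) : nsq n (v - w) = nsq n (w - v) := by
  simp only [nsq, Pi.sub_apply, sub_sq_comm]

lemma l1_single {p : ℕ} (a : Fin p) : l1 (Pi.single a (1 : ℝ)) = 1 := by
  simp [l1, Pi.single_apply, apply_ite abs]

lemma fvec_single {n p : ℕ} (ψ : Fin p → Fin n → ℝ) (a : Fin p) :
    fvec ψ (Pi.single a 1) = ψ a := by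
  funext i
  simp [fvec, Pi.single_apply, ite_mul]

lemma restr_add {p : ℕ} (S : Finset (Fin p)) (β γ : Fin p → ℝ) :
    restr S (β + γ) = restr S β + restr S γ := by
  funext j
  by_cases hj : j ∈ S <;> simp [restr, hj]

lemma restr_single_of_mem {p : ℕ} {S : Finset (Fin p)} {a : Fin p} (ha : a ∈ S) (c : ℝ) :
    restr S (Pi.single a c) = Pi.single a c := by
  funext j
  by_cases hj : j = a
  · subst hj; simp [restr, ha]
  · simp [restr, hj]

lemma restr_single_of_notMem {p : ℕ} {S : Finset (Fin p)} {a : Fin p} (ha : a ∉ S) (c : ℝ) :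
    restr S (Pi.single a c) = 0 := by
  funext j
  by_cases hj : j = a
  · subst hj; simp [restr, ha]
  · simp [restr, hj]

lemma bddBelow_phiSq_set {n p : ℕ} (ψ : Fin p → Fin n → ℝ) (L : ℝ) (S : Finset (Fin p)) :
    BddBelow {x : ℝ | ∃ β : Fin p → ℝ, l1 (restr S β) = 1 ∧ l1 (β - restr S β) ≤ L ∧
      x = S.card * nsq n (fvec ψ (restr S β) - fvec ψ (β - restr S β))} := by
  refine ⟨0, ?_⟩
  rintro _ ⟨β, -, -, rfl⟩
  exact mul_nonneg S.card.cast_nonneg (nsq_nonneg _)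

lemma phiSq_le_card_mul_nsq_sub {n p : ℕ} (ψ : Fin p → Fin n → ℝ) {L : ℝ} (hL : 1 ≤ L)
    {S : Finset (Fin p)} {k j : Fin p} (hk : k ∈ S) (hj : j ∉ S) :
    phiSq ψ L S ≤ S.card * nsq n (ψ k - ψ j) := by
  set β : Fin p → ℝ := Pi.single k 1 + Pi.single j 1
  have hβS : restr S β = Pi.single k 1 := by
    rw [restr_add, restr_single_of_mem hk, restr_single_of_notMem hj, add_zero]
  have hβSc : β - restr S β = Pi.single j 1 := by
    rw [hβS, add_sub_cancel_left]
  refine csInf_le (bddBelow_phiSq_set ψ L S) ⟨β, ?_, ?_, ?_⟩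
  · rw [hβS, l1_single]
  · rwa [hβSc, l1_single]
  · rw [hβSc, hβS, fvec_single, fvec_single]

theorem stmt12_general {n p : ℕ}
    (ψ : Fin p → Fin n → ℝ)
    (u : ℝ) (J : Finset (Fin p))
    (hmaxpack : ∀ j : Fin p, j ∉ J → ∃ k ∈ J, nnorm n (ψ j - ψ k) < u)
    (S : Finset (Fin p)) (hJS : J ⊆ S) (hSne : S ≠ Finset.univ)
    (L : ℝ) (hL : 1 ≤ L) :
    phiSq ψ L S ≤ S.card * u ^ 2 := by
  obtain ⟨j, hjS⟩ : ∃ j, j ∉ S := by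
    by_contra! h
    exact hSne (Finset.eq_univ_iff_forall.2 h)
  obtain ⟨k, hkJ, hjk⟩ := hmaxpack j fun hjJ => hjS (hJS hjJ)
  have hdist : nsq n (ψ k - ψ j) ≤ u ^ 2 := by
    rw [nsq_sub_comm, ← nnorm_sq]
    exact pow_le_pow_left₀ (Real.sqrt_nonneg _) hjk.le 2
  calc phiSq ψ L S ≤ S.card * nsq n (ψ k - ψ j) :=
        phiSq_le_card_mul_nsq_sub ψ hL (hJS hkJ) hjS
    _ ≤ S.card * u ^ 2 := mul_le_mul_of_nonneg_left hdist S.card.cast_nonneg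

theorem stmt12 {n p : ℕ} (hn : 1 ≤ n) (hp : 1 ≤ p)
    (ψ : Fin p → Fin n → ℝ) (hψ : ∀ j, nnorm n (ψ j) = 1)
    (u : ℝ) (hu : 0 < u) (J : Finset (Fin p))
    (hpack : ∀ k ∈ J, ∀ l ∈ J, k ≠ l → u ≤ nnorm n (ψ k - ψ l))
    (hmaxpack : ∀ j : Fin p, j ∉ J → ∃ k ∈ J, nnorm n (ψ j - ψ k) < u)
    (S : Finset (Fin p)) (hJS : J ⊆ S) (hSne : S ≠ Finset.univ)
    (L : ℝ) (hL : 1 ≤ L) :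
    phiSq ψ L S ≤ S.card * u ^ 2 :=
  stmt12_general ψ u J hmaxpack S hJS hSne L hL
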